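/- arXiv:math/0612460 — 5 statements merged into one kernel-verified Lean document; each statement's English description precedes it below -/
import Mathlib

section
/- Let (A, A*) be a tridiagonal pair on V with eigenspace orderings V_0, ..., V_d of A and V*_0, ..., V*_d of A*, and let D denote the (unital) subalgebra of End(V) generated by A. Then for every nonzero vector u ∈ V*_0 and every nonzero element X ∈ D, the vector Xu is nonzero. -/
open Polynomial

/-- A tridiagonal pair on `V`, with eigenspace orderings `Ev 0, ..., Ev d` of `A`
(with eigenvalues `θ 0, ..., θ d`) and `Ew 0, ..., Ew d` of `B = A*`
(with eigenvalues `θ' 0, ..., θ' d`).  For indices `i > d` we set `Ev i = ⊥`,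
`Ew i = ⊥`, encoding the conventions `V_{-1} = 0`, `V_{d+1} = 0`
(note `Ev (0 - 1) = Ev 0` by truncated subtraction, which is harmless in the
tridiagonal conditions below since `Ev i` appears in the sum anyway). -/
structure TridiagonalPair (K V : Type*) [Field K] [AddCommGroup V] [Module K V]
    [FiniteDimensional K V] where
  A : Module.End K V
  B : Module.End K V
  d : ℕ
  Ev : ℕ → Submodule K V
  Ew : ℕ → Submodule K V
  θ : ℕ → K
  θ' : ℕ → K
  hEv_eig : ∀ i ≤ d, Ev i = Module.End.eigenspace A (θ i)
  hEv_ne : ∀ i ≤ d, Ev i ≠ ⊥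
  hEv_all : ∀ μ : K, Module.End.eigenspace A μ ≠ ⊥ → ∃ i ≤ d, θ i = μ
  hθ_inj : ∀ i ≤ d, ∀ j ≤ d, θ i = θ j → i = j
  hEv_top : (⨆ i ∈ Finset.range (d + 1), Ev i) = ⊤
  hEv_bot : ∀ i, d < i → Ev i = ⊥
  hEw_eig : ∀ i ≤ d, Ew i = Module.End.eigenspace B (θ' i)
  hEw_ne : ∀ i ≤ d, Ew i ≠ ⊥
  hEw_all : ∀ μ : K, Module.End.eigenspace B μ ≠ ⊥ → ∃ i ≤ d, θ' i = μ
  hθ'_inj : ∀ i ≤ d, ∀ j ≤ d, θ' i = θ' j → i = j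
  hEw_top : (⨆ i ∈ Finset.range (d + 1), Ew i) = ⊤
  hEw_bot : ∀ i, d < i → Ew i = ⊥
  hTriB : ∀ i ≤ d, ∀ v ∈ Ev i, B v ∈ Ev (i - 1) ⊔ Ev i ⊔ Ev (i + 1)
  hTriA : ∀ i ≤ d, ∀ v ∈ Ew i, A v ∈ Ew (i - 1) ⊔ Ew i ⊔ Ew (i + 1)
  hIrr : ∀ W : Submodule K V, (∀ v ∈ W, A v ∈ W) → (∀ v ∈ W, B v ∈ W) →
    W = ⊥ ∨ W = ⊤

/-- The polynomial `τ_i = (λ - θ_0)(λ - θ_1) ⋯ (λ - θ_{i-1})`. -/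
noncomputable def tau {K : Type*} [Field K] (θ : ℕ → K) (i : ℕ) : Polynomial K :=
  ∏ k ∈ Finset.range i, (X - C (θ k))

section Aux
variable {K V : Type*} [Field K] [AddCommGroup V] [Module K V] [FiniteDimensional K V]

lemma ker_aeval_mul_le (A : Module.End K V) {f g : Polynomial K} (h : IsCoprime f g) :
    LinearMap.ker (aeval A (f * g)) ≤
      LinearMap.ker (aeval A f) ⊔ LinearMap.ker (aeval A g) := by
  obtain ⟨a, b, hab⟩ := h
  intro v hv
  rw [LinearMap.mem_ker] at hv
  have hv1 : v = aeval A (a * f) v + aeval A (b * g) v := by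
    have h1 : aeval A (a * f + b * g) v = aeval A (1 : K[X]) v := by rw [hab]
    rw [map_add, map_one, LinearMap.add_apply, Module.End.one_apply] at h1
    exact h1.symm
  have h2 : aeval A (b * g) v ∈ LinearMap.ker (aeval A f) := by
    rw [LinearMap.mem_ker]
    rw [← Module.End.mul_apply, ← map_mul, show f * (b * g) = b * (f * g) by ring,
      map_mul, Module.End.mul_apply, hv, map_zero]
  have h3 : aeval A (a * f) v ∈ LinearMap.ker (aeval A g) := by
    rw [LinearMap.mem_ker]
    rw [← Module.End.mul_apply, ← map_mul, show g * (a * f) = a * (f * g) by ring,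
      map_mul, Module.End.mul_apply, hv, map_zero]
  rw [hv1]
  exact Submodule.add_mem _ (Submodule.mem_sup_right h3) (Submodule.mem_sup_left h2)

lemma ker_prod_le (A : Module.End K V) (c : ℕ → K) (T : Finset ℕ)
    (hc : ∀ i ∈ T, ∀ j ∈ T, c i = c j → i = j) :
    LinearMap.ker (aeval A (∏ k ∈ T, (X - C (c k)))) ≤
      ⨆ k ∈ T, LinearMap.ker (aeval A (X - C (c k))) := by
  induction T using Finset.induction_on with
  | empty => simp [Module.End.one_eq_id]
  | @insert i T hi ih =>
    rw [Finset.prod_insert hi]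
    have hcop : IsCoprime (X - C (c i)) (∏ k ∈ T, (X - C (c k))) := by
      apply IsCoprime.prod_right
      intro j hj
      refine isCoprime_X_sub_C_of_isUnit_sub ?_
      have hne : c i ≠ c j := by
        intro h
        exact hi ((hc i (Finset.mem_insert_self i T) j (Finset.mem_insert_of_mem hj) h) ▸ hj)
      exact (sub_ne_zero_of_ne hne).isUnit
    refine le_trans (ker_aeval_mul_le A hcop) (sup_le ?_ ?_)
    · exact le_iSup₂ (f := fun k (_ : k ∈ insert i T) => LinearMap.ker (aeval A (X - C (c k)))) i
        (Finset.mem_insert_self i T)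
    · refine le_trans (ih fun a ha b hb h =>
        hc a (Finset.mem_insert_of_mem ha) b (Finset.mem_insert_of_mem hb) h) ?_
      exact iSup₂_le fun k hk =>
        le_iSup₂ (f := fun k (_ : k ∈ insert i T) => LinearMap.ker (aeval A (X - C (c k)))) k
          (Finset.mem_insert_of_mem hk)

lemma chain_bot (A B : Module.End K V)
    (hIrr : ∀ W : Submodule K V, (∀ v ∈ W, A v ∈ W) → (∀ v ∈ W, B v ∈ W) → W = ⊥ ∨ W = ⊤)
    (W : ℕ → Submodule K V) (a b : ℕ → K)
    (hA : ∀ j, ∀ v ∈ W j, A v - a j • v ∈ W (j + 1))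
    (hB0 : ∀ v ∈ W 0, B v - b 0 • v = 0)
    (hB : ∀ j, ∀ v ∈ W (j + 1), B v - b (j + 1) • v ∈ W j)
    (hne : (⨆ j, W j) ≠ ⊤) :
    ∀ j, W j = ⊥ := by
  have hsub : ∀ j, W j ≤ ⨆ j, W j := fun j => le_iSup W j
  have hinvA : ∀ v ∈ (⨆ j, W j), A v ∈ (⨆ j, W j) := by
    have hle : (⨆ j, W j) ≤ Submodule.comap A (⨆ j, W j) := by
      refine iSup_le fun j => fun w hw => ?_
      simp only [Submodule.mem_comap]
      have h1 := hA j w hw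
      have h2 : A w = (A w - a j • w) + a j • w := by abel
      rw [h2]
      exact Submodule.add_mem _ (hsub (j + 1) h1)
        (Submodule.smul_mem _ _ (hsub j hw))
    exact fun v hv => hle hv
  have hinvB : ∀ v ∈ (⨆ j, W j), B v ∈ (⨆ j, W j) := by
    have hle : (⨆ j, W j) ≤ Submodule.comap B (⨆ j, W j) := by
      refine iSup_le fun j => fun w hw => ?_
      simp only [Submodule.mem_comap]
      have h2 : B w = (B w - b j • w) + b j • w := by abel
      rw [h2]
      refine Submodule.add_mem _ ?_ (Submodule.smul_mem _ _ (hsub j hw))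
      match j with
      | 0 => rw [hB0 w hw]; exact Submodule.zero_mem _
      | (j + 1) => exact hsub j (hB j w hw)
    exact fun v hv => hle hv
  have hbot : (⨆ j, W j) = ⊥ := by
    rcases hIrr (⨆ j, W j) hinvA hinvB with h | h
    · exact h
    · exact absurd h hne
  exact fun j => le_bot_iff.mp (le_trans (hsub j) hbot.le)

end Aux

namespace TDPAux

variable {K V : Type*} [Field K] [AddCommGroup V] [Module K V] [FiniteDimensional K V]
variable (p : TridiagonalPair K V)

/-- `F j = V*_0 + ... + V*_j`. -/
def Fc (j : ℕ) : Submodule K V := ⨆ k ∈ Finset.range (j + 1), p.Ew k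

/-- `G m = V_m + ... + V_d`. -/
def Gc (m : ℕ) : Submodule K V := ⨆ k ∈ Finset.Icc m p.d, p.Ev k

/-- `G' m = V_0 + ... + V_{d-m}`. -/
def Gc' (m : ℕ) : Submodule K V := ⨆ k ∈ Finset.range (p.d + 1 - m), p.Ev k

lemma le_Fc {k j : ℕ} (h : k ≤ j) : p.Ew k ≤ Fc p j :=
  le_iSup₂ (f := fun k (_ : k ∈ Finset.range (j + 1)) => p.Ew k) k
    (Finset.mem_range.mpr (by omega))

lemma Fc_mono {j j' : ℕ} (h : j ≤ j') : Fc p j ≤ Fc p j' :=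
  iSup₂_le fun k hk => le_Fc p (by have := Finset.mem_range.mp hk; omega)

lemma le_Gc {k m : ℕ} (h1 : m ≤ k) (h2 : k ≤ p.d) : p.Ev k ≤ Gc p m :=
  le_iSup₂ (f := fun k (_ : k ∈ Finset.Icc m p.d) => p.Ev k) k
    (Finset.mem_Icc.mpr ⟨h1, h2⟩)

lemma Gc_anti {m : ℕ} : Gc p (m + 1) ≤ Gc p m :=
  iSup₂_le fun k hk => by
    have := Finset.mem_Icc.mp hk
    exact le_Gc p (by omega) (by omega)

lemma Gc_bot {m : ℕ} (h : p.d < m) : Gc p m = ⊥ := by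
  rw [Gc, Finset.Icc_eq_empty (by omega)]
  simp

lemma le_Gc' {k m : ℕ} (h : k < p.d + 1 - m) : p.Ev k ≤ Gc' p m :=
  le_iSup₂ (f := fun k (_ : k ∈ Finset.range (p.d + 1 - m)) => p.Ev k) k
    (Finset.mem_range.mpr h)

lemma Gc'_anti {m : ℕ} : Gc' p (m + 1) ≤ Gc' p m :=
  iSup₂_le fun k hk => by
    have := Finset.mem_range.mp hk
    exact le_Gc' p (by omega)

lemma Gc'_bot {m : ℕ} (h : p.d < m) : Gc' p m = ⊥ := by
  rw [Gc', show p.d + 1 - m = 0 by omega]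
  simp

lemma Ew_apply {k : ℕ} (hk : k ≤ p.d) {v : V} (hv : v ∈ p.Ew k) :
    p.B v = p.θ' k • v := by
  rw [p.hEw_eig k hk] at hv
  exact Module.End.mem_eigenspace_iff.mp hv

lemma Ev_apply {k : ℕ} (hk : k ≤ p.d) {v : V} (hv : v ∈ p.Ev k) :
    p.A v = p.θ k • v := by
  rw [p.hEv_eig k hk] at hv
  exact Module.End.mem_eigenspace_iff.mp hv

lemma Fc_zero : Fc p 0 = p.Ew 0 := by
  refine le_antisymm (iSup₂_le fun k hk => ?_) (le_Fc p le_rfl)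
  have : k = 0 := by have := Finset.mem_range.mp hk; omega
  rw [this]

lemma hAF (j : ℕ) : Fc p j ≤ Submodule.comap p.A (Fc p (j + 1)) := by
  refine iSup₂_le fun k hk v hv => ?_
  have hkj : k ≤ j := by have := Finset.mem_range.mp hk; omega
  simp only [Submodule.mem_comap]
  rcases le_or_gt k p.d with hkd | hkd
  · have h3 := p.hTriA k hkd v hv
    have hle : p.Ew (k - 1) ⊔ p.Ew k ⊔ p.Ew (k + 1) ≤ Fc p (j + 1) :=
      sup_le (sup_le (le_Fc p (by omega)) (le_Fc p (by omega))) (le_Fc p (by omega))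
    exact hle h3
  · rw [p.hEw_bot k hkd, Submodule.mem_bot] at hv
    rw [hv, map_zero]
    exact Submodule.zero_mem _

lemma hBF0 {v : V} (hv : v ∈ Fc p 0) : p.B v - p.θ' 0 • v = 0 := by
  rw [Fc_zero] at hv
  rw [Ew_apply p (Nat.zero_le _) hv, sub_self]

lemma hBF1 (j : ℕ) :
    Fc p (j + 1) ≤ Submodule.comap (p.B - p.θ' (j + 1) • 1) (Fc p j) := by
  refine iSup₂_le fun k hk v hv => ?_
  have hkj : k ≤ j + 1 := by have := Finset.mem_range.mp hk; omega
  simp only [Submodule.mem_comap, LinearMap.sub_apply, LinearMap.smul_apply,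
    Module.End.one_apply]
  rcases le_or_gt k p.d with hkd | hkd
  · rw [Ew_apply p hkd hv, ← sub_smul]
    by_cases hkj' : k ≤ j
    · exact le_Fc p hkj' (Submodule.smul_mem _ _ hv)
    · have : k = j + 1 := by omega
      rw [this, sub_self, zero_smul]
      exact Submodule.zero_mem _
  · rw [p.hEw_bot k hkd, Submodule.mem_bot] at hv
    rw [hv, map_zero, smul_zero, sub_zero]
    exact Submodule.zero_mem _

lemma hAG (m : ℕ) :
    Gc p (m + 1) ≤ Submodule.comap (p.A - p.θ (m + 1) • 1) (Gc p (m + 2)) := by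
  refine iSup₂_le fun k hk v hv => ?_
  obtain ⟨h1, h2⟩ := Finset.mem_Icc.mp hk
  simp only [Submodule.mem_comap, LinearMap.sub_apply, LinearMap.smul_apply,
    Module.End.one_apply]
  rw [Ev_apply p h2 hv, ← sub_smul]
  by_cases hke : k = m + 1
  · rw [hke, sub_self, zero_smul]
    exact Submodule.zero_mem _
  · exact le_Gc p (by omega) h2 (Submodule.smul_mem _ _ hv)

lemma hBG (m : ℕ) : Gc p (m + 1) ≤ Submodule.comap p.B (Gc p m) := by
  refine iSup₂_le fun k hk v hv => ?_
  obtain ⟨h1, h2⟩ := Finset.mem_Icc.mp hk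
  simp only [Submodule.mem_comap]
  have h3 := p.hTriB k h2 v hv
  have hle : p.Ev (k - 1) ⊔ p.Ev k ⊔ p.Ev (k + 1) ≤ Gc p m := by
    refine sup_le (sup_le (le_Gc p (by omega) (by omega)) (le_Gc p (by omega) h2)) ?_
    rcases le_or_gt (k + 1) p.d with h4 | h4
    · exact le_Gc p (by omega) h4
    · rw [p.hEv_bot (k + 1) h4]
      exact bot_le
  exact hle h3

lemma hAG' (j : ℕ) :
    Gc' p (j + 1) ≤ Submodule.comap (p.A - p.θ (p.d - j - 1) • 1) (Gc' p (j + 2)) := by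
  refine iSup₂_le fun k hk v hv => ?_
  have h1 : k < p.d + 1 - (j + 1) := Finset.mem_range.mp hk
  simp only [Submodule.mem_comap, LinearMap.sub_apply, LinearMap.smul_apply,
    Module.End.one_apply]
  rw [Ev_apply p (by omega) hv, ← sub_smul]
  by_cases hke : k = p.d - j - 1
  · rw [hke, sub_self, zero_smul]
    exact Submodule.zero_mem _
  · exact le_Gc' p (by omega) (Submodule.smul_mem _ _ hv)

lemma hBG' (j : ℕ) : Gc' p (j + 1) ≤ Submodule.comap p.B (Gc' p j) := by
  refine iSup₂_le fun k hk v hv => ?_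
  have h1 : k < p.d + 1 - (j + 1) := Finset.mem_range.mp hk
  simp only [Submodule.mem_comap]
  have h3 := p.hTriB k (by omega) v hv
  have hle : p.Ev (k - 1) ⊔ p.Ev k ⊔ p.Ev (k + 1) ≤ Gc' p j :=
    sup_le (sup_le (le_Gc' p (by omega)) (le_Gc' p (by omega))) (le_Gc' p (by omega))
  exact hle h3

lemma sup_ne_top (Wf : ℕ → Submodule K V) (h1 : ∀ j, Wf j ≤ Fc p j)
    (h2 : ∀ j, p.d ≤ j → Wf j = ⊥) : (⨆ j, Wf j) ≠ ⊤ := by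
  intro htop
  have hle : (⨆ j, Wf j) ≤ ⨆ k ∈ Finset.range p.d, p.Ew k := by
    refine iSup_le fun j => ?_
    rcases le_or_gt p.d j with hj | hj
    · rw [h2 j hj]; exact bot_le
    · refine le_trans (h1 j) (iSup₂_le fun k hk => ?_)
      have hkj : k ≤ j := by have := Finset.mem_range.mp hk; omega
      exact le_iSup₂ (f := fun k (_ : k ∈ Finset.range p.d) => p.Ew k) k
        (Finset.mem_range.mpr (by omega))
  have hle2 : (⨆ k ∈ Finset.range p.d, p.Ew k) ≤
      ⨆ μ, ⨆ (_ : μ ≠ p.θ' p.d), Module.End.eigenspace p.B μ := by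
    refine iSup₂_le fun k hk => ?_
    have hkd : k ≤ p.d := by have := Finset.mem_range.mp hk; omega
    have hkd' : k ≠ p.d := by have := Finset.mem_range.mp hk; omega
    have hne : p.θ' k ≠ p.θ' p.d := fun h => hkd' (p.hθ'_inj k hkd p.d le_rfl h)
    rw [p.hEw_eig k hkd]
    exact le_iSup₂ (f := fun μ (_ : μ ≠ p.θ' p.d) => Module.End.eigenspace p.B μ)
      (p.θ' k) hne
  have hdisj := Module.End.eigenspaces_iSupIndep p.B (p.θ' p.d)
  have hEwd2 : p.Ew p.d ≤ ⨆ μ, ⨆ (_ : μ ≠ p.θ' p.d), Module.End.eigenspace p.B μ := by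
    refine le_trans (le_trans ?_ hle) hle2
    rw [htop]
    exact le_top
  have hEwd1 : p.Ew p.d ≤ Module.End.eigenspace p.B (p.θ' p.d) :=
    (p.hEw_eig p.d le_rfl).le
  exact p.hEw_ne p.d le_rfl (le_bot_iff.mp (hdisj hEwd1 hEwd2))

lemma chain1 (j : ℕ) : Fc p j ⊓ Gc p (j + 1) = ⊥ := by
  refine chain_bot p.A p.B p.hIrr (fun j => Fc p j ⊓ Gc p (j + 1))
    (fun j => p.θ (j + 1)) p.θ' ?_ ?_ ?_ ?_ j
  · intro j v hv
    rw [Submodule.mem_inf] at hv ⊢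
    obtain ⟨hvF, hvG⟩ := hv
    constructor
    · exact Submodule.sub_mem _ (hAF p j hvF)
        (Submodule.smul_mem _ _ (Fc_mono p (Nat.le_succ j) hvF))
    · have h := hAG p j hvG
      simpa [Submodule.mem_comap, LinearMap.sub_apply, LinearMap.smul_apply,
        Module.End.one_apply] using h
  · intro v hv
    rw [Submodule.mem_inf] at hv
    exact hBF0 p hv.1
  · intro j v hv
    rw [Submodule.mem_inf] at hv ⊢
    constructor
    · have h := hBF1 p j hv.1
      simpa [Submodule.mem_comap, LinearMap.sub_apply, LinearMap.smul_apply,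
        Module.End.one_apply] using h
    · have hB : p.B v ∈ Gc p (j + 1) := hBG p (j + 1) hv.2
      exact Submodule.sub_mem _ hB
        (Submodule.smul_mem _ _ (Gc_anti p hv.2))
  · refine sup_ne_top p _ (fun j => inf_le_left) (fun j hj => ?_)
    rw [Gc_bot p (by omega)]
    simp

lemma chain2 (j : ℕ) : Fc p j ⊓ Gc' p (j + 1) = ⊥ := by
  refine chain_bot p.A p.B p.hIrr (fun j => Fc p j ⊓ Gc' p (j + 1))
    (fun j => p.θ (p.d - j - 1)) p.θ' ?_ ?_ ?_ ?_ j
  · intro j v hv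
    rw [Submodule.mem_inf] at hv ⊢
    obtain ⟨hvF, hvG⟩ := hv
    constructor
    · exact Submodule.sub_mem _ (hAF p j hvF)
        (Submodule.smul_mem _ _ (Fc_mono p (Nat.le_succ j) hvF))
    · have h := hAG' p j hvG
      simpa [Submodule.mem_comap, LinearMap.sub_apply, LinearMap.smul_apply,
        Module.End.one_apply] using h
  · intro v hv
    rw [Submodule.mem_inf] at hv
    exact hBF0 p hv.1
  · intro j v hv
    rw [Submodule.mem_inf] at hv ⊢
    constructor
    · have h := hBF1 p j hv.1
      simpa [Submodule.mem_comap, LinearMap.sub_apply, LinearMap.smul_apply,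
        Module.End.one_apply] using h
    · have hB : p.B v ∈ Gc' p (j + 1) := hBG' p (j + 1) hv.2
      exact Submodule.sub_mem _ hB
        (Submodule.smul_mem _ _ (Gc'_anti p hv.2))
  · refine sup_ne_top p _ (fun j => inf_le_left) (fun j hj => ?_)
    rw [Gc'_bot p (by omega)]
    simp

lemma aeval_X_sub_C (c : K) :
    aeval p.A (X - C c) = p.A - c • 1 := by
  rw [map_sub, aeval_X, aeval_C, Algebra.algebraMap_eq_smul_one]

lemma ker_le_Gc (m : ℕ) :
    LinearMap.ker (aeval p.A (∏ k ∈ Finset.Icc m p.d, (X - C (p.θ k)))) ≤ Gc p m := by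
  refine le_trans (ker_prod_le p.A p.θ _ fun i hi j hj h =>
    p.hθ_inj i (Finset.mem_Icc.mp hi).2 j (Finset.mem_Icc.mp hj).2 h)
    (iSup₂_le fun k hk => ?_)
  obtain ⟨h1, h2⟩ := Finset.mem_Icc.mp hk
  rw [aeval_X_sub_C, ← Module.End.eigenspace_def, ← p.hEv_eig k h2]
  exact le_Gc p h1 h2

lemma ker_le_Gc' (m : ℕ) :
    LinearMap.ker (aeval p.A (∏ k ∈ Finset.range (p.d + 1 - m), (X - C (p.θ k)))) ≤
      Gc' p m := by
  refine le_trans (ker_prod_le p.A p.θ _ fun i hi j hj h =>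
    p.hθ_inj i (by have := Finset.mem_range.mp hi; omega) j
      (by have := Finset.mem_range.mp hj; omega) h)
    (iSup₂_le fun k hk => ?_)
  have h1 := Finset.mem_range.mp hk
  rw [aeval_X_sub_C, ← Module.End.eigenspace_def, ← p.hEv_eig k (by omega)]
  exact le_Gc' p h1

lemma tau_mem_Fc (i : ℕ) {u : V} (hu : u ∈ Fc p 0) :
    aeval p.A (tau p.θ i) u ∈ Fc p i := by
  induction i with
  | zero =>
    have : tau p.θ 0 = 1 := by rw [tau, Finset.range_zero, Finset.prod_empty]
    rw [this, map_one, Module.End.one_apply]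
    exact hu
  | succ i ih =>
    have hstep : tau p.θ (i + 1) = (X - C (p.θ i)) * tau p.θ i := by
      rw [tau, tau, Finset.prod_range_succ, mul_comm]
    rw [hstep, map_mul, Module.End.mul_apply, aeval_X_sub_C]
    have hw := ih
    simp only [LinearMap.sub_apply, LinearMap.smul_apply, Module.End.one_apply]
    exact Submodule.sub_mem _ (hAF p i hw)
      (Submodule.smul_mem _ _ (Fc_mono p (Nat.le_succ i) hw))

lemma mu_eq_zero :
    aeval p.A (∏ k ∈ Finset.range (p.d + 1), (X - C (p.θ k))) = 0 := by
  rw [← LinearMap.ker_eq_top, eq_top_iff, ← p.hEv_top]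
  refine iSup₂_le fun k hk v hv => ?_
  have hkd : k ≤ p.d := by have := Finset.mem_range.mp hk; omega
  rw [LinearMap.mem_ker]
  have hsplit : (∏ k' ∈ Finset.range (p.d + 1), (X - C (p.θ k'))) =
      (∏ k' ∈ (Finset.range (p.d + 1)).erase k, (X - C (p.θ k'))) * (X - C (p.θ k)) :=
    (Finset.prod_erase_mul _ _ hk).symm
  rw [hsplit, map_mul, Module.End.mul_apply, aeval_X_sub_C]
  have : (p.A - p.θ k • 1) v = 0 := by
    simp only [LinearMap.sub_apply, LinearMap.smul_apply, Module.End.one_apply]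
    rw [Ev_apply p hkd hv, sub_self]
  rw [this, map_zero]

end TDPAux

open TDPAux

/-- For every nonzero `u ∈ V*_0` and every nonzero `X` in the subalgebra `D`
of `End(V)` generated by `A`, the vector `X u` is nonzero. -/
theorem stmt0 {K V : Type*} [Field K] [AddCommGroup V] [Module K V]
    [FiniteDimensional K V] (hpos : 0 < Module.finrank K V)
    (p : TridiagonalPair K V)
    (u : V) (hu : u ∈ p.Ew 0) (hu0 : u ≠ 0)
    (X : Module.End K V) (hX : X ∈ Algebra.adjoin K {p.A}) (hX0 : X ≠ 0) :
    X u ≠ 0 := by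
  intro hXu
  rw [Algebra.adjoin_singleton_eq_range_aeval, AlgHom.mem_range] at hX
  obtain ⟨f, hf⟩ := hX
  -- find an index i with X - C (θ i) not dividing f
  have hex : ∃ i, i ≤ p.d ∧ ¬ (Polynomial.X - C (p.θ i)) ∣ f := by
    by_contra h
    push_neg at h
    have hdvd : (∏ k ∈ Finset.range (p.d + 1), (Polynomial.X - C (p.θ k))) ∣ f := by
      refine Finset.prod_dvd_of_coprime ?_ ?_
      · intro a ha b hb hab
        refine isCoprime_X_sub_C_of_isUnit_sub ?_
        refine (sub_ne_zero_of_ne fun h' => hab ?_).isUnit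
        exact p.hθ_inj a (by have := Finset.mem_range.mp (Finset.mem_coe.mp ha); omega)
          b (by have := Finset.mem_range.mp (Finset.mem_coe.mp hb); omega) h'
      · intro i hi
        exact h i (by have := Finset.mem_range.mp hi; omega)
    obtain ⟨q, hq⟩ := hdvd
    exact hX0 (by rw [← hf, hq, map_mul, mu_eq_zero, zero_mul])
  obtain ⟨i, hid, hnd⟩ := hex
  have hcop : IsCoprime (Polynomial.X - C (p.θ i)) f :=
    (irreducible_X_sub_C (p.θ i)).coprime_iff_not_dvd.mpr hnd
  obtain ⟨a, b, hab⟩ := hcop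
  set μi := ∏ k ∈ (Finset.range (p.d + 1)).erase i, (Polynomial.X - C (p.θ k)) with hμidef
  have hprod : μi * (Polynomial.X - C (p.θ i)) = ∏ k ∈ Finset.range (p.d + 1), (Polynomial.X - C (p.θ k)) :=
    Finset.prod_erase_mul _ _ (Finset.mem_range.mpr (by omega))
  have hμiu : aeval p.A μi u = 0 := by
    have hsplit : μi = a * (μi * (Polynomial.X - C (p.θ i))) + (b * μi) * f := by ring_nf; linear_combination μi * hab.symm
    have t1 : aeval p.A (a * (μi * (Polynomial.X - C (p.θ i)))) = 0 := by
      rw [hprod, map_mul, mu_eq_zero, mul_zero]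
    have t2 : aeval p.A ((b * μi) * f) u = 0 := by
      rw [map_mul, Module.End.mul_apply, hf, hXu, map_zero]
    rw [hsplit, map_add, LinearMap.add_apply, t1, t2, LinearMap.zero_apply, add_zero]
  have huF0 : u ∈ Fc p 0 := le_Fc p le_rfl hu
  -- the vector τ_i(A) u lies in F_i ∩ G_{i+1} = 0
  have hwF : aeval p.A (tau p.θ i) u ∈ Fc p i := tau_mem_Fc p i huF0
  have hwG : aeval p.A (tau p.θ i) u ∈ Gc p (i + 1) := by
    refine ker_le_Gc p (i + 1) ?_
    rw [LinearMap.mem_ker, ← Module.End.mul_apply, ← map_mul]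
    have hunion : Finset.range i ∪ Finset.Icc (i + 1) p.d =
        (Finset.range (p.d + 1)).erase i := by
      ext x
      simp only [Finset.mem_union, Finset.mem_range, Finset.mem_Icc, Finset.mem_erase]
      omega
    have hdisj : Disjoint (Finset.range i) (Finset.Icc (i + 1) p.d) := by
      rw [Finset.disjoint_left]
      intro x hx hx'
      have := Finset.mem_range.mp hx
      have := Finset.mem_Icc.mp hx'
      omega
    have hmul : (∏ k ∈ Finset.Icc (i + 1) p.d, (Polynomial.X - C (p.θ k))) * tau p.θ i = μi := by
      rw [tau, mul_comm, ← Finset.prod_union hdisj, hunion]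
    rw [hmul, hμiu]
  have hw0 : aeval p.A (tau p.θ i) u = 0 := by
    have hmem : aeval p.A (tau p.θ i) u ∈ Fc p i ⊓ Gc p (i + 1) :=
      Submodule.mem_inf.mpr ⟨hwF, hwG⟩
    rw [chain1 p i, Submodule.mem_bot] at hmem
    exact hmem
  -- hence τ_d(A) u = 0, so u ∈ F_0 ∩ G'_1 = 0
  have hτd : aeval p.A (tau p.θ p.d) u = 0 := by
    have hsplit2 : tau p.θ p.d = (∏ k ∈ Finset.Ico i p.d, (Polynomial.X - C (p.θ k))) * tau p.θ i := by
      rw [tau, tau, mul_comm, Finset.prod_range_mul_prod_Ico _ hid]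
    rw [hsplit2, map_mul, Module.End.mul_apply, hw0, map_zero]
  have huG' : u ∈ Gc' p 1 := by
    refine ker_le_Gc' p 1 ?_
    rw [LinearMap.mem_ker]
    have : p.d + 1 - 1 = p.d := by omega
    rw [this]
    exact hτd
  have hmem : u ∈ Fc p 0 ⊓ Gc' p 1 := Submodule.mem_inf.mpr ⟨huF0, huG'⟩
  rw [chain2 p 0, Submodule.mem_bot] at hmem
  exact hu0 hmem
end

section
/- Let (A, A*) be a tridiagonal pair on V with eigenspace orderings V_0, ..., V_d of A and V*_0, ..., V*_d of A*, with corresponding eigenvalues θ_0, ..., θ_d of A. For 0 ≤ i ≤ d let τ_i denote the polynomial (λ − θ_0)(λ − θ_1)···(λ − θ_{i−1}). Then for every nonzero vector u ∈ V*_0 and every i with 0 ≤ i ≤ d, the vector τ_i(A)u is nonzero. -/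
open Polynomial

/-!
Suppose `τ_i(A) u = 0`. As `A` is diagonalizable with distinct eigenvalues `θ_j`, this forces
`u ∈ P_i`, where `P_m = V_0 + ⋯ + V_{m-1}`; put also `Q_m = V*_0 + ⋯ + V*_{m-1}`. Then `u` lies in
`W = ∑_{a + b = i + 1} P_a ∩ Q_b` (take `a = i`, `b = 1`). Since `A - θ_m` maps `P_{m+1}` into
`P_m` while `A` maps `Q_m` into `Q_{m+1}`, and symmetrically for `A*`, the space `W` is invariant
under `A` and `A*`, so `W = V` by irreducibility. But `W ⊆ P_i`, which meets the nonzero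
eigenspace `V_i` trivially.
-/

open Module.End

theorem Polynomial.mem_of_aeval_eq_zero_of_isCoprime {R M : Type*} [CommSemiring R]
    [AddCommMonoid M] [Module R M] {f : Module.End R M} {W : Submodule R M} (hW : W ≤ W.comap f)
    {p q : R[X]} (hpq : IsCoprime p q) (hq : ∀ v, aeval f q v ∈ W) {u : M}
    (hu : aeval f p u = 0) : u ∈ W := by
  obtain ⟨a, b, hab⟩ := hpq
  have hu_eq : aeval f b (aeval f q u) = u := by
    simpa [Module.End.mul_apply, hu] using congr(aeval f $hab u)
  exact hu_eq ▸ aeval_apply_smul_mem_of_le_comap (hq u) b f hW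

theorem Module.End.ker_aeval_prod_le_iSup_eigenspace {K V ι : Type*} [Field K]
    [AddCommGroup V] [Module K V] [DecidableEq ι] {f : Module.End K V} {μ : ι → K}
    {s t : Finset ι} (hts : t ⊆ s) (hμ : Set.InjOn μ s) (hs : ⨆ k ∈ s, eigenspace f (μ k) = ⊤) :
    LinearMap.ker (aeval f (∏ k ∈ t, (X - C (μ k)))) ≤ ⨆ k ∈ t, eigenspace f (μ k) := by
  set W := ⨆ k ∈ t, eigenspace f (μ k)
  set q := ∏ k ∈ s \ t, (X - C (μ k))
  have hle : ∀ k ∈ t, eigenspace f (μ k) ≤ W := fun k hk => le_iSup₂_of_le k hk le_rfl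
  have hW : W ≤ W.comap f := iSup₂_le fun k hk =>
    (eigenspace_mem_invtSubmodule f (μ k)).trans (Submodule.comap_mono (hle k hk))
  have hcop : IsCoprime (∏ k ∈ t, (X - C (μ k))) q :=
    IsCoprime.prod_left fun k hk => IsCoprime.prod_right fun l hl =>
      isCoprime_X_sub_C_of_isUnit_sub <| IsUnit.mk0 _ <| sub_ne_zero.2 fun h =>
        (Finset.mem_sdiff.1 hl).2 (hμ (hts hk) (Finset.mem_sdiff.1 hl).1 h ▸ hk)
  have hq : ⨆ k ∈ s, eigenspace f (μ k) ≤ W.comap (aeval f q) := by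
    refine iSup₂_le fun k hk v hv => ?_
    rw [Submodule.mem_comap, aeval_apply_of_mem_apply_eq_smul (mem_eigenspace_iff.1 hv)]
    by_cases hkt : k ∈ t
    · exact W.smul_mem _ (hle k hkt hv)
    · rw [eval_prod, Finset.prod_eq_zero (Finset.mem_sdiff.2 ⟨hk, hkt⟩) (by simp), zero_smul]
      exact W.zero_mem
  exact fun u hu => mem_of_aeval_eq_zero_of_isCoprime hW hcop
    (fun v => hq (hs ▸ Submodule.mem_top)) hu

section AntidiagonalSup

variable {R M : Type*} [Ring R] [AddCommGroup M] [Module R M]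

def antidiagonalSup (P Q : ℕ → Submodule R M) (n : ℕ) : Submodule R M :=
  ⨆ (a) (b) (_ : a + b = n), P a ⊓ Q b

variable {P Q : ℕ → Submodule R M} {n : ℕ}

theorem inf_le_antidiagonalSup {a b : ℕ} (h : a + b = n) :
    P a ⊓ Q b ≤ antidiagonalSup P Q n :=
  le_iSup₂_of_le a b <| le_iSup_of_le h le_rfl

theorem antidiagonalSup_comm : antidiagonalSup P Q n = antidiagonalSup Q P n :=
  have key {P Q : ℕ → Submodule R M} : antidiagonalSup P Q n ≤ antidiagonalSup Q P n :=
    iSup₂_le fun a b => iSup_le fun h => (inf_comm (P a) (Q b)).trans_le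
      (inf_le_antidiagonalSup ((add_comm b a).trans h))
  key.antisymm key

theorem antidiagonalSup_le (hQ : Q 0 = ⊥) (hP : Monotone P) :
    antidiagonalSup P Q (n + 1) ≤ P n := by
  refine iSup₂_le fun a b => iSup_le fun hab => ?_
  rcases b with _ | _
  · simp [hQ]
  · exact inf_le_left.trans (hP (by omega))

theorem antidiagonalSup_le_comap {f : Module.End R M} (hP : P 0 = ⊥) (hQ : Monotone Q)
    (hlower : ∀ m < n, ∃ c : R, ∀ v ∈ P (m + 1), f v - c • v ∈ P m)
    (hraise : ∀ m < n, ∀ v ∈ Q m, f v ∈ Q (m + 1)) :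
    antidiagonalSup P Q n ≤ (antidiagonalSup P Q n).comap f := by
  refine iSup₂_le fun a b => iSup_le fun hab v ⟨hvP, hvQ⟩ => ?_
  rcases a with _ | m
  · simp_all
  obtain ⟨c, hc⟩ := hlower m (by omega)
  have hfQ : f v - c • v ∈ Q (b + 1) :=
    sub_mem (hraise b (by omega) v hvQ) (Submodule.smul_mem _ c (hQ b.le_succ hvQ))
  rw [Submodule.mem_comap, ← sub_add_cancel (f v) (c • v)]
  exact add_mem (inf_le_antidiagonalSup (by omega) ⟨hc v hvP, hfQ⟩)
    (Submodule.smul_mem _ c (inf_le_antidiagonalSup hab ⟨hvP, hvQ⟩))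

end AntidiagonalSup

namespace TridiagonalPair

variable {K V : Type*} [Field K] [AddCommGroup V] [Module K V] [FiniteDimensional K V]
  (p : TridiagonalPair K V)

def swap : TridiagonalPair K V where
  A := p.B
  B := p.A
  d := p.d
  Ev := p.Ew
  Ew := p.Ev
  θ := p.θ'
  θ' := p.θ
  hEv_eig := p.hEw_eig
  hEv_ne := p.hEw_ne
  hEv_all := p.hEw_all
  hθ_inj := p.hθ'_inj
  hEv_top := p.hEw_top
  hEv_bot := p.hEw_bot
  hEw_eig := p.hEv_eig
  hEw_ne := p.hEv_ne
  hEw_all := p.hEv_all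
  hθ'_inj := p.hθ_inj
  hEw_top := p.hEv_top
  hEw_bot := p.hEv_bot
  hTriB := p.hTriA
  hTriA := p.hTriB
  hIrr W hA hB := p.hIrr W hB hA

def flag (m : ℕ) : Submodule K V :=
  ⨆ j ∈ Finset.range m, p.Ev j

theorem Ev_le_flag {j m : ℕ} (h : j < m) : p.Ev j ≤ p.flag m :=
  le_iSup₂_of_le j (Finset.mem_range.2 h) le_rfl

theorem flag_zero : p.flag 0 = ⊥ := by
  simp [flag]

theorem flag_mono : Monotone p.flag := fun _ _ h =>
  iSup₂_le fun _ hj => p.Ev_le_flag ((Finset.mem_range.1 hj).trans_le h)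

theorem flag_eq_iSup_eigenspace {m : ℕ} (hm : m ≤ p.d + 1) :
    p.flag m = ⨆ j ∈ Finset.range m, eigenspace p.A (p.θ j) :=
  biSup_congr fun j hj => p.hEv_eig j (by grind)

theorem sub_smul_mem_flag {m : ℕ} (hm : m ≤ p.d) {v : V} (hv : v ∈ p.flag (m + 1)) :
    p.A v - p.θ m • v ∈ p.flag m := by
  suffices p.flag (m + 1) ≤ (p.flag m).comap (p.A - p.θ m • 1) by simpa using this hv
  refine iSup₂_le fun j hj w hw => ?_
  have hj : j ≤ m := Nat.lt_succ_iff.1 (Finset.mem_range.1 hj)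
  have hAw : p.A w = p.θ j • w := mem_eigenspace_iff.1 (p.hEv_eig j (by omega) ▸ hw)
  rcases hj.lt_or_eq with hjm | rfl
  · simpa [hAw, ← sub_smul] using (p.flag m).smul_mem (p.θ j - p.θ m) (p.Ev_le_flag hjm hw)
  · simp [hAw]

theorem B_mem_flag_succ {m : ℕ} (hm : m ≤ p.d + 1) {v : V} (hv : v ∈ p.flag m) :
    p.B v ∈ p.flag (m + 1) := by
  suffices p.flag m ≤ (p.flag (m + 1)).comap p.B from this hv
  refine iSup₂_le fun j hj w hw => ?_
  have hj : j < m := Finset.mem_range.1 hj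
  exact sup_le (sup_le (p.Ev_le_flag (by omega)) (p.Ev_le_flag (by omega)))
    (p.Ev_le_flag (by omega)) (p.hTriB j (by omega) w hw)

theorem mem_flag_of_aeval_tau_eq_zero {i : ℕ} (hi : i ≤ p.d + 1) {u : V}
    (hu : aeval p.A (tau p.θ i) u = 0) : u ∈ p.flag i := by
  rw [p.flag_eq_iSup_eigenspace hi]
  refine ker_aeval_prod_le_iSup_eigenspace (s := Finset.range (p.d + 1))
    (Finset.range_subset_range.2 hi) ?_ ?_ hu
  · exact fun j hj k hk => p.hθ_inj j (by grind) k (by grind)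
  · exact (p.flag_eq_iSup_eigenspace le_rfl).symm.trans p.hEv_top

theorem flag_ne_top {i : ℕ} (hi : i ≤ p.d) : p.flag i ≠ ⊤ := by
  intro htop
  have hdisj : Disjoint (eigenspace p.A (p.θ i)) (p.flag i) := by
    refine (eigenspaces_iSupIndep p.A (p.θ i)).mono_right ?_
    rw [p.flag_eq_iSup_eigenspace (by omega)]
    refine iSup₂_le fun j hj => le_iSup₂_of_le (p.θ j) (fun h => ?_) le_rfl
    exact (Finset.mem_range.1 hj).ne (p.hθ_inj j (by grind) i hi h)
  rw [htop, disjoint_top, ← p.hEv_eig i hi] at hdisj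
  exact p.hEv_ne i hi hdisj

theorem antidiagonalSup_flag_eq_bot_or_top {n : ℕ} (hn : n ≤ p.d + 1) :
    antidiagonalSup p.flag p.swap.flag n = ⊥ ∨ antidiagonalSup p.flag p.swap.flag n = ⊤ := by
  refine p.hIrr _ (antidiagonalSup_le_comap p.flag_zero p.swap.flag_mono ?_ ?_) ?_
  · exact fun m hm => ⟨p.θ m, fun v => p.sub_smul_mem_flag (by omega)⟩
  · exact fun m hm v => p.swap.B_mem_flag_succ (by omega : m ≤ p.d + 1)
  rw [antidiagonalSup_comm]
  refine antidiagonalSup_le_comap p.swap.flag_zero p.flag_mono ?_ ?_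
  · exact fun m hm => ⟨p.θ' m, fun v => p.swap.sub_smul_mem_flag (by omega : m ≤ p.d)⟩
  · exact fun m hm v => p.B_mem_flag_succ (by omega)

end TridiagonalPair

theorem stmt1_general {K V : Type*} [Field K] [AddCommGroup V] [Module K V]
    [FiniteDimensional K V]
    (p : TridiagonalPair K V)
    (u : V) (hu : u ∈ p.Ew 0) (hu0 : u ≠ 0) (i : ℕ) (hi : i ≤ p.d) :
    (aeval p.A (tau p.θ i)) u ≠ 0 := by
  intro hτ
  have huW : u ∈ antidiagonalSup p.flag p.swap.flag (i + 1) :=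
    inf_le_antidiagonalSup rfl ⟨p.mem_flag_of_aeval_tau_eq_zero (by omega) hτ,
      p.swap.Ev_le_flag zero_lt_one hu⟩
  rcases p.antidiagonalSup_flag_eq_bot_or_top (by omega : i + 1 ≤ p.d + 1) with hbot | htop
  · exact hu0 ((Submodule.mem_bot K).1 (hbot ▸ huW))
  · exact p.flag_ne_top hi <| top_le_iff.1 <|
      htop ▸ antidiagonalSup_le p.swap.flag_zero p.flag_mono

/-- For every nonzero `u ∈ V*_0` and every `0 ≤ i ≤ d`, the vector
`τ_i(A) u` is nonzero. -/
theorem stmt1 {K V : Type*} [Field K] [AddCommGroup V] [Module K V]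
    [FiniteDimensional K V] (hpos : 0 < Module.finrank K V)
    (p : TridiagonalPair K V)
    (u : V) (hu : u ∈ p.Ew 0) (hu0 : u ≠ 0) (i : ℕ) (hi : i ≤ p.d) :
    (aeval p.A (tau p.θ i)) u ≠ 0 :=
  stmt1_general p u hu hu0 i hi
end

section
/- Let (A, A*) be a tridiagonal pair on V with eigenspace orderings V_0, ..., V_d of A and V*_0, ..., V*_d of A*, with corresponding eigenvalues θ_0, ..., θ_d of A, and let τ_i = (λ − θ_0)···(λ − θ_{i−1}) for 0 ≤ i ≤ d. Then for every nonzero vector u ∈ V*_0, the vectors τ_0(A)u, τ_1(A)u, ..., τ_d(A)u are linearly independent over K; in particular, they form a basis of the subspace Du = {Xu : X ∈ D}, where D is the subalgebra of End(V) generated by A. -/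
open Polynomial

/-!
Write `L n = V*_0 + ⋯ + V*_{n-1}` and `U n = V_n + ⋯ + V_d`. The vector `τ_n(A) u` lies in
`L (n + 1)`, because `A` raises the `V*`-filtration by one step, and in `U n`, because
`A - θ_k` kills `V_k`. Irreducibility gives `L n ∩ U n = 0`: the sum of these intersections is
stable under `A` and `B`, yet lies in `L d`, which misses `V*_d`. The same argument for the
reversed ordering `V_d, …, V_0` gives `V*_0 ∩ (V_0 + ⋯ + V_{d-1}) = 0`; as
`ker τ_n(A) = V_0 + ⋯ + V_{n-1}`, this makes `τ_n(A) u ≠ 0` for `n ≤ d`. Hence `τ_n(A) u` avoids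
`L n`, which contains the earlier vectors, and the vectors are independent. Finally
`A τ_n(A) u = τ_{n+1}(A) u + θ_n τ_n(A) u` and `τ_{d+1}(A) = 0`, so their span is `A`-invariant
and equals `D u`.
-/

open Module.End

section Flags

variable {K V : Type*} [Field K] [AddCommGroup V] [Module K V]

def lowerSum (W : ℕ → Submodule K V) (n : ℕ) : Submodule K V := ⨆ k < n, W k

def upperSum (W : ℕ → Submodule K V) (n : ℕ) : Submodule K V := ⨆ k ≥ n, W k

variable {W : ℕ → Submodule K V}

lemma le_lowerSum {k n : ℕ} (h : k < n) : W k ≤ lowerSum W n := le_iSup₂_of_le k h le_rfl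

lemma le_upperSum {k n : ℕ} (h : n ≤ k) : W k ≤ upperSum W n := le_iSup₂_of_le k h le_rfl

lemma lowerSum_mono : Monotone (lowerSum W) :=
  fun _ _ h => iSup₂_le fun _ hk => le_lowerSum (hk.trans_le h)

lemma upperSum_anti : Antitone (upperSum W) :=
  fun _ _ h => iSup₂_le fun _ hk => le_upperSum (h.trans hk)

@[simp]
lemma lowerSum_zero : lowerSum W 0 = ⊥ := by simp [lowerSum]

lemma lowerSum_succ (n : ℕ) : lowerSum W (n + 1) = lowerSum W n ⊔ W n := Nat.iSup_lt_succ W n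

@[simp]
lemma lowerSum_one : lowerSum W 1 = W 0 := by simp [lowerSum_succ]

lemma upperSum_eq_bot {d : ℕ} (h : ∀ k, d < k → W k = ⊥) : upperSum W (d + 1) = ⊥ :=
  iSup₂_eq_bot.2 h

lemma sub_algebraMap_apply_of_mem_eigenspace {A : Module.End K V} {μ : K} {v : V}
    (hv : v ∈ eigenspace A μ) (c : K) : (A - algebraMap K _ c) v = (μ - c) • v := by
  rw [LinearMap.sub_apply, Module.algebraMap_end_apply, mem_eigenspace_iff.1 hv, sub_smul]

variable {A B : Module.End K V} {μ : ℕ → K}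

lemma lowerSum_le_comap_succ (hW : ∀ k, W k ≤ (W (k - 1) ⊔ W k ⊔ W (k + 1)).comap B) (n : ℕ) :
    lowerSum W n ≤ (lowerSum W (n + 1)).comap B :=
  iSup₂_le fun k hk => (hW k).trans <| Submodule.comap_mono <|
    sup_le (sup_le (le_lowerSum (by omega)) (le_lowerSum (by omega))) (le_lowerSum (by omega))

lemma lowerSum_le_comap_sub_succ (hW : ∀ k, W k ≤ (W (k - 1) ⊔ W k ⊔ W (k + 1)).comap B)
    (n : ℕ) (c : K) : lowerSum W n ≤ (lowerSum W (n + 1)).comap (B - algebraMap K _ c) :=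
  fun v hv => by
    rw [Submodule.mem_comap, LinearMap.sub_apply, Module.algebraMap_end_apply]
    exact sub_mem (lowerSum_le_comap_succ hW n hv)
      (Submodule.smul_mem _ _ (lowerSum_mono n.le_succ hv))

lemma upperSum_succ_le_comap (hW : ∀ k, W k ≤ (W (k - 1) ⊔ W k ⊔ W (k + 1)).comap B) (n : ℕ) :
    upperSum W (n + 1) ≤ (upperSum W n).comap B :=
  iSup₂_le fun k hk => (hW k).trans <| Submodule.comap_mono <|
    sup_le (sup_le (le_upperSum (by omega)) (le_upperSum (by omega))) (le_upperSum (by omega))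

lemma lowerSum_succ_le_comap_sub (hW : ∀ k, W k ≤ eigenspace A (μ k)) (n : ℕ) :
    lowerSum W (n + 1) ≤ (lowerSum W n).comap (A - algebraMap K _ (μ n)) := by
  refine iSup₂_le fun k hk v hv => ?_
  rw [Submodule.mem_comap, sub_algebraMap_apply_of_mem_eigenspace (hW k hv)]
  rcases (Nat.lt_succ_iff.1 hk).lt_or_eq with hlt | rfl
  · exact Submodule.smul_mem _ _ (le_lowerSum hlt hv)
  · simp

lemma upperSum_le_comap_sub (hW : ∀ k, W k ≤ eigenspace A (μ k)) (n : ℕ) :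
    upperSum W n ≤ (upperSum W (n + 1)).comap (A - algebraMap K _ (μ n)) := by
  refine iSup₂_le fun k hk v hv => ?_
  rw [Submodule.mem_comap, sub_algebraMap_apply_of_mem_eigenspace (hW k hv)]
  rcases (show n ≤ k from hk).lt_or_eq with hlt | rfl
  · exact Submodule.smul_mem _ _ (le_upperSum hlt hv)
  · simp

end Flags

section Tau

variable {K V : Type*} [Field K] [AddCommGroup V] [Module K V]

lemma tau_succ (θ : ℕ → K) (n : ℕ) : tau θ (n + 1) = (X - C (θ n)) * tau θ n := by
  rw [tau, tau, Finset.prod_range_succ, mul_comm]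

lemma aeval_tau_succ_apply (A : Module.End K V) (θ : ℕ → K) (n : ℕ) (v : V) :
    aeval A (tau θ (n + 1)) v = (A - algebraMap K _ (θ n)) (aeval A (tau θ n) v) := by
  rw [tau_succ, map_mul, map_sub, aeval_X, aeval_C, Module.End.mul_apply]

lemma ker_aeval_X_sub_C (A : Module.End K V) (c : K) :
    LinearMap.ker (aeval A (X - C c)) = eigenspace A c := by
  rw [eigenspace_def, map_sub, aeval_X, aeval_C, Algebra.algebraMap_eq_smul_one]

lemma ker_aeval_tau (A : Module.End K V) {θ : ℕ → K} {n : ℕ} (hθ : Set.InjOn θ (Set.Iio n)) :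
    LinearMap.ker (aeval A (tau θ n)) = lowerSum (fun k => eigenspace A (θ k)) n := by
  induction n with
  | zero => simp [tau, Module.End.one_eq_id]
  | succ n ih =>
    have hcop : IsCoprime (X - C (θ n)) (tau θ n) :=
      IsCoprime.prod_right fun k hk => isCoprime_X_sub_C_of_isUnit_sub <| IsUnit.mk0 _ <|
        sub_ne_zero.2 fun h => (Finset.mem_range.1 hk).ne' <|
          hθ (Set.mem_Iio.2 n.lt_succ_self) (Set.mem_Iio.2 (by simp at hk; omega)) h
    rw [tau_succ, ← sup_ker_aeval_eq_ker_aeval_mul_of_coprime _ hcop,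
      ih (hθ.mono fun k hk => Nat.lt_succ_of_lt hk), ker_aeval_X_sub_C, lowerSum_succ, sup_comm]

lemma map_applyₗ_adjoin_le {A : Module.End K V} {S : Submodule K V} (hS : S ≤ S.comap A)
    {u : V} (hu : u ∈ S) :
    (Subalgebra.toSubmodule (Algebra.adjoin K {A})).map (LinearMap.applyₗ u) ≤ S := by
  rintro _ ⟨T, hT, rfl⟩
  suffices ∀ v ∈ S, T v ∈ S from this u hu
  induction hT using Algebra.adjoin_induction with
  | mem x hx => rw [Set.mem_singleton_iff.1 hx]; exact fun v hv => hS hv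
  | algebraMap r => exact fun v hv => by simpa using S.smul_mem r hv
  | add x y _ _ hx hy => exact fun v hv => S.add_mem (hx v hv) (hy v hv)
  | mul x y _ _ hx hy => exact fun v hv => hx _ (hy v hv)

theorem linearIndependent_of_notMem_of_mem_succ {F : ℕ → Submodule K V} (hF : Monotone F)
    {x : ℕ → V} (hmem : ∀ k, x k ∈ F (k + 1)) {n : ℕ} (hnot : ∀ k < n, x k ∉ F k) :
    LinearIndependent K (fun i : Fin n => x i) := by
  induction n with
  | zero => exact linearIndependent_empty_type
  | succ n ih =>
    refine linearIndependent_finSucc'.2 ⟨ih fun k hk => hnot k (by omega), fun h => ?_⟩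
    refine hnot n n.lt_succ_self (Submodule.span_le.2 ?_ h)
    rintro _ ⟨i, rfl⟩
    exact hF i.is_lt (hmem i)

end Tau

namespace TridiagonalPair

variable {K V : Type*} [Field K] [AddCommGroup V] [Module K V] [FiniteDimensional K V]
  (p : TridiagonalPair K V)

lemma Ev_le_eigenspace (k : ℕ) : p.Ev k ≤ eigenspace p.A (p.θ k) := by
  rcases le_or_gt k p.d with h | h
  · exact (p.hEv_eig k h).le
  · simp [p.hEv_bot k h]

lemma Ew_le_eigenspace (k : ℕ) : p.Ew k ≤ eigenspace p.B (p.θ' k) := by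
  rcases le_or_gt k p.d with h | h
  · exact (p.hEw_eig k h).le
  · simp [p.hEw_bot k h]

lemma Ev_le_comap_B (k : ℕ) : p.Ev k ≤ (p.Ev (k - 1) ⊔ p.Ev k ⊔ p.Ev (k + 1)).comap p.B := by
  rcases le_or_gt k p.d with h | h
  · exact p.hTriB k h
  · simp [p.hEv_bot k h]

lemma Ew_le_comap_A (k : ℕ) : p.Ew k ≤ (p.Ew (k - 1) ⊔ p.Ew k ⊔ p.Ew (k + 1)).comap p.A := by
  rcases le_or_gt k p.d with h | h
  · exact p.hTriA k h
  · simp [p.hEw_bot k h]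

lemma lowerSum_Ev_eq_top : lowerSum p.Ev (p.d + 1) = ⊤ := by
  simpa only [lowerSum, Finset.mem_range] using p.hEv_top

lemma upperSum_Ev_zero : upperSum p.Ev 0 = ⊤ :=
  top_unique <| p.lowerSum_Ev_eq_top.symm.le.trans <| iSup₂_le fun k _ => le_upperSum k.zero_le

lemma lowerSum_Ew_ne_top : lowerSum p.Ew p.d ≠ ⊤ := by
  intro htop
  have hdisj : Disjoint (p.Ew p.d) (lowerSum p.Ew p.d) := by
    rw [p.hEw_eig p.d le_rfl]
    refine (p.B.eigenspaces_iSupIndep (p.θ' p.d)).mono_right (iSup₂_le fun k hk => ?_)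
    rw [p.hEw_eig k hk.le]
    exact le_iSup₂_of_le (p.θ' k) (fun h => hk.ne (p.hθ'_inj k hk.le p.d le_rfl h)) le_rfl
  exact p.hEw_ne p.d le_rfl (hdisj.eq_bot_of_le (htop ▸ le_top))

theorem lowerSum_Ew_inf_eq_bot {U : ℕ → Submodule K V} {μ : ℕ → K} (hU : Antitone U)
    (hUA : ∀ n, U n ≤ (U (n + 1)).comap (p.A - algebraMap K _ (μ n)))
    (hUB : ∀ n, U (n + 1) ≤ (U n).comap p.B) (hUd : U (p.d + 1) = ⊥) (n : ℕ) :
    lowerSum p.Ew n ⊓ U n = ⊥ := by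
  set Z : ℕ → Submodule K V := fun n => lowerSum p.Ew n ⊓ U n with hZ
  set S : Submodule K V := ⨆ n, Z n
  have hA : S ≤ S.comap p.A := iSup_le fun n v hv => by
    have h1 : (p.A - algebraMap K _ (μ n)) v ∈ Z (n + 1) :=
      ⟨lowerSum_le_comap_sub_succ p.Ew_le_comap_A n _ hv.1, hUA n hv.2⟩
    rw [Submodule.mem_comap, ← sub_add_cancel (p.A v) (μ n • v)]
    exact add_mem (le_iSup Z (n + 1) (by simpa using h1)) (le_iSup Z n (Z n |>.smul_mem _ hv))
  have hB : S ≤ S.comap p.B := iSup_le fun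
    | 0 => by simp [hZ]
    | n + 1 => fun v hv => by
      have h1 : (p.B - algebraMap K _ (p.θ' n)) v ∈ Z n := by
        refine ⟨lowerSum_succ_le_comap_sub p.Ew_le_eigenspace n hv.1, ?_⟩
        rw [LinearMap.sub_apply, Module.algebraMap_end_apply]
        exact sub_mem (hUB n hv.2) ((U n).smul_mem _ (hU n.le_succ hv.2))
      rw [Submodule.mem_comap, ← sub_add_cancel (p.B v) (p.θ' n • v)]
      exact add_mem (le_iSup Z n (by simpa using h1)) (le_iSup Z (n + 1) (Z _ |>.smul_mem _ hv))
  have hS : S ≤ lowerSum p.Ew p.d := iSup_le fun n => by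
    rcases le_or_gt n p.d with h | h
    · exact inf_le_left.trans (lowerSum_mono h)
    · exact inf_le_right.trans ((hU h).trans hUd.le) |>.trans bot_le
  rcases p.hIrr S (fun v hv => hA hv) (fun v hv => hB hv) with h | h
  · exact le_bot_iff.1 (h ▸ le_iSup Z n)
  · exact absurd (top_le_iff.1 (h ▸ hS)) p.lowerSum_Ew_ne_top

lemma lowerSum_Ew_inf_upperSum_Ev (n : ℕ) : lowerSum p.Ew n ⊓ upperSum p.Ev n = ⊥ :=
  p.lowerSum_Ew_inf_eq_bot upperSum_anti (upperSum_le_comap_sub p.Ev_le_eigenspace)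
    (upperSum_succ_le_comap p.Ev_le_comap_B) (upperSum_eq_bot p.hEv_bot) n

lemma Ew_zero_inf_lowerSum_Ev : p.Ew 0 ⊓ lowerSum p.Ev p.d = ⊥ := by
  -- `n ↦ V_0 + ⋯ + V_{d-n}` is the flag `upperSum` of the reversed ordering `V_d, …, V_0`.
  have hUA (n : ℕ) : lowerSum p.Ev (p.d + 1 - n) ≤
      (lowerSum p.Ev (p.d + 1 - (n + 1))).comap (p.A - algebraMap K _ (p.θ (p.d - n))) := by
    rcases le_or_gt n p.d with h | h
    · rw [show p.d + 1 - n = p.d - n + 1 by omega, show p.d + 1 - (n + 1) = p.d - n by omega]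
      exact lowerSum_succ_le_comap_sub p.Ev_le_eigenspace _
    · simp [show p.d + 1 - n = 0 by omega]
  have hUB (n : ℕ) :
      lowerSum p.Ev (p.d + 1 - (n + 1)) ≤ (lowerSum p.Ev (p.d + 1 - n)).comap p.B := by
    rcases le_or_gt n p.d with h | h
    · rw [show p.d + 1 - n = p.d + 1 - (n + 1) + 1 by omega]
      exact lowerSum_le_comap_succ p.Ev_le_comap_B _
    · simp [show p.d + 1 - (n + 1) = 0 by omega]
  simpa using p.lowerSum_Ew_inf_eq_bot (fun m n h => lowerSum_mono (by omega)) hUA hUB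
    (by simp) 1

lemma ker_aeval_tau_eq_lowerSum_Ev {n : ℕ} (hn : n ≤ p.d + 1) :
    LinearMap.ker (aeval p.A (tau p.θ n)) = lowerSum p.Ev n := by
  rw [ker_aeval_tau p.A fun i hi j hj h =>
    p.hθ_inj i (by simp at hi; omega) j (by simp at hj; omega) h]
  exact biSup_congr fun k hk => (p.hEv_eig k (by omega)).symm

lemma aeval_tau_d_succ_eq_zero : aeval p.A (tau p.θ (p.d + 1)) = 0 :=
  LinearMap.ker_eq_top.1 <| by rw [p.ker_aeval_tau_eq_lowerSum_Ev le_rfl, p.lowerSum_Ev_eq_top]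

lemma aeval_tau_apply_mem_upperSum_Ev (u : V) (n : ℕ) :
    aeval p.A (tau p.θ n) u ∈ upperSum p.Ev n := by
  induction n with
  | zero => simp [p.upperSum_Ev_zero]
  | succ n ih =>
    rw [aeval_tau_succ_apply]
    exact upperSum_le_comap_sub p.Ev_le_eigenspace n ih

variable {p} {u : V}

lemma aeval_tau_apply_mem_lowerSum_Ew (hu : u ∈ p.Ew 0) (n : ℕ) :
    aeval p.A (tau p.θ n) u ∈ lowerSum p.Ew (n + 1) := by
  induction n with
  | zero => simpa [tau] using hu
  | succ n ih =>
    rw [aeval_tau_succ_apply]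
    exact lowerSum_le_comap_sub_succ p.Ew_le_comap_A _ _ ih

lemma aeval_tau_apply_ne_zero (hu : u ∈ p.Ew 0) (hu0 : u ≠ 0) {n : ℕ} (hn : n ≤ p.d) :
    aeval p.A (tau p.θ n) u ≠ 0 := fun h => by
  have hker : u ∈ lowerSum p.Ev p.d :=
    lowerSum_mono hn <| p.ker_aeval_tau_eq_lowerSum_Ev (n := n) (by omega) ▸ LinearMap.mem_ker.2 h
  exact hu0 <| (Submodule.eq_bot_iff _).1 p.Ew_zero_inf_lowerSum_Ev u ⟨hu, hker⟩

lemma aeval_tau_apply_notMem_lowerSum_Ew (hu : u ∈ p.Ew 0) (hu0 : u ≠ 0) {n : ℕ}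
    (hn : n ≤ p.d) : aeval p.A (tau p.θ n) u ∉ lowerSum p.Ew n := fun h =>
  aeval_tau_apply_ne_zero hu hu0 hn <| (Submodule.eq_bot_iff _).1
    (p.lowerSum_Ew_inf_upperSum_Ev n) _ ⟨h, p.aeval_tau_apply_mem_upperSum_Ev u n⟩

variable (p u)

lemma span_aeval_tau_apply :
    Submodule.span K (Set.range fun i : Fin (p.d + 1) => aeval p.A (tau p.θ i) u) =
      (Subalgebra.toSubmodule (Algebra.adjoin K {p.A})).map (LinearMap.applyₗ u) := by
  set S := Submodule.span K (Set.range fun i : Fin (p.d + 1) => aeval p.A (tau p.θ i) u)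
  have hmem (i : ℕ) (hi : i ≤ p.d) : aeval p.A (tau p.θ i) u ∈ S :=
    Submodule.subset_span ⟨⟨i, by omega⟩, rfl⟩
  have hA : S ≤ S.comap p.A := Submodule.span_le.2 <| Set.range_subset_iff.2 fun i => by
    have hnext : aeval p.A (tau p.θ (i + 1)) u ∈ S := by
      rcases (Nat.lt_succ_iff.1 i.is_lt).lt_or_eq with h | h
      · exact hmem _ h
      · simp [h, p.aeval_tau_d_succ_eq_zero]
    rw [SetLike.mem_coe, Submodule.mem_comap, ← sub_add_cancel (p.A _) (p.θ i • _)]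
    refine add_mem ?_ (S.smul_mem _ (hmem i (by omega)))
    simpa [aeval_tau_succ_apply] using hnext
  refine le_antisymm (Submodule.span_le.2 ?_)
    (map_applyₗ_adjoin_le hA (by simpa [tau] using hmem 0))
  rintro _ ⟨i, rfl⟩
  exact ⟨_, aeval_mem_adjoin_singleton K p.A, rfl⟩

end TridiagonalPair

theorem stmt2_general {K V : Type*} [Field K] [AddCommGroup V] [Module K V]
    [FiniteDimensional K V]
    (p : TridiagonalPair K V)
    (u : V) (hu : u ∈ p.Ew 0) (hu0 : u ≠ 0) :
    LinearIndependent K (fun i : Fin (p.d + 1) => (aeval p.A (tau p.θ i)) u) ∧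
    Submodule.span K (Set.range (fun i : Fin (p.d + 1) => (aeval p.A (tau p.θ i)) u)) =
      Submodule.map (LinearMap.applyₗ u)
        (Subalgebra.toSubmodule (Algebra.adjoin K {p.A})) :=
  ⟨linearIndependent_of_notMem_of_mem_succ lowerSum_mono
      (x := fun n => aeval p.A (tau p.θ n) u) (p.aeval_tau_apply_mem_lowerSum_Ew hu)
      fun _ hk => p.aeval_tau_apply_notMem_lowerSum_Ew hu hu0 (by omega),
    p.span_aeval_tau_apply u⟩

/-- For every nonzero `u ∈ V*_0`, the vectors `τ_0(A)u, τ_1(A)u, ..., τ_d(A)u`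
are linearly independent over `K`, and they form a basis of the subspace
`D u = {X u : X ∈ D}`, where `D` is the subalgebra of `End(V)` generated by `A`. -/
theorem stmt2 {K V : Type*} [Field K] [AddCommGroup V] [Module K V]
    [FiniteDimensional K V] (hpos : 0 < Module.finrank K V)
    (p : TridiagonalPair K V)
    (u : V) (hu : u ∈ p.Ew 0) (hu0 : u ≠ 0) :
    LinearIndependent K (fun i : Fin (p.d + 1) => (aeval p.A (tau p.θ i)) u) ∧
    Submodule.span K (Set.range (fun i : Fin (p.d + 1) => (aeval p.A (tau p.θ i)) u)) =
      Submodule.map (LinearMap.applyₗ u)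
        (Subalgebra.toSubmodule (Algebra.adjoin K {p.A})) :=
  stmt2_general p u hu hu0
end

section
/- Let (A, A*) be a tridiagonal pair on V with eigenspace orderings V_0, ..., V_d of A and V*_0, ..., V*_d of A*, with eigenvalues θ_0, ..., θ_d of A. Fix an integer i with 1 ≤ i ≤ d, and for 0 ≤ r ≤ i−1 define W_r = (V*_0 + V*_1 + ··· + V*_r) ∩ (V_0 + V_1 + ··· + V_{i−r−1}), with the convention W_i = 0. Then (A − θ_{i−r−1} I) W_r ⊆ W_{r+1} for 0 ≤ r ≤ i−1. -/
open Polynomial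

/-- Fix `1 ≤ i ≤ d` and for `0 ≤ r ≤ i - 1` define
`W_r = (V*_0 + ⋯ + V*_r) ∩ (V_0 + ⋯ + V_{i-r-1})` (with `W_i = 0`; note the
formula below gives `W i = ⊥` automatically since `Finset.range 0 = ∅`).
Then `(A - θ_{i-r-1} I) W_r ⊆ W_{r+1}` for `0 ≤ r ≤ i - 1`. -/
theorem stmt3 {K V : Type*} [Field K] [AddCommGroup V] [Module K V]
    [FiniteDimensional K V] (hpos : 0 < Module.finrank K V)
    (p : TridiagonalPair K V)
    (i : ℕ) (hi1 : 1 ≤ i) (hid : i ≤ p.d)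
    (W : ℕ → Submodule K V)
    (hW : ∀ r, W r = (⨆ h ∈ Finset.range (r + 1), p.Ew h) ⊓
      (⨆ h ∈ Finset.range (i - r), p.Ev h)) :
    ∀ r ≤ i - 1, ∀ v ∈ W r,
      (p.A - p.θ (i - r - 1) • (1 : Module.End K V)) v ∈ W (r + 1) := by
  intro r hr v hv
  rw [hW] at hv ⊢
  rw [Submodule.mem_inf] at hv ⊢
  obtain ⟨hv1, hv2⟩ := hv
  have hrd : r + 1 ≤ p.d := by omega
  constructor
  · -- part 1: image lies in sum of Ew over range (r+2)
    have h1 : (⨆ h ∈ Finset.range (r + 1), p.Ew h) ≤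
        Submodule.comap (p.A - p.θ (i - r - 1) • (1 : Module.End K V))
          (⨆ h ∈ Finset.range (r + 1 + 1), p.Ew h) := by
      refine iSup₂_le fun h hh w hw => ?_
      have hhd : h ≤ p.d := by
        have := Finset.mem_range.mp hh; omega
      have hA := p.hTriA h hhd w hw
      have hle : p.Ew (h - 1) ⊔ p.Ew h ⊔ p.Ew (h + 1) ≤
          ⨆ h ∈ Finset.range (r + 1 + 1), p.Ew h := by
        have hm := Finset.mem_range.mp hh
        refine sup_le (sup_le ?_ ?_) ?_ <;>
          exact le_iSup₂_of_le _ (Finset.mem_range.mpr (by omega)) le_rfl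
      have hle2 : p.Ew h ≤ ⨆ h ∈ Finset.range (r + 1 + 1), p.Ew h :=
        le_iSup₂_of_le h (Finset.mem_range.mpr (by have := Finset.mem_range.mp hh; omega)) le_rfl
      have hθ : p.θ (i - r - 1) • w ∈ ⨆ h ∈ Finset.range (r + 1 + 1), p.Ew h :=
        Submodule.smul_mem _ _ (hle2 hw)
      simp only [Submodule.mem_comap, LinearMap.sub_apply, LinearMap.smul_apply,
        Module.End.one_apply]
      exact Submodule.sub_mem _ (hle hA) hθ
    exact h1 hv1
  · have h2 : (⨆ h ∈ Finset.range (i - r), p.Ev h) ≤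
        Submodule.comap (p.A - p.θ (i - r - 1) • (1 : Module.End K V))
          (⨆ h ∈ Finset.range (i - (r + 1)), p.Ev h) := by
      refine iSup₂_le fun h hh w hw => ?_
      have hhr : h < i - r := Finset.mem_range.mp hh
      have hhd : h ≤ p.d := by omega
      have hw' := hw
      rw [p.hEv_eig h hhd] at hw'
      have hAw : p.A w = p.θ h • w := Module.End.mem_eigenspace_iff.mp hw'
      simp only [Submodule.mem_comap, LinearMap.sub_apply, LinearMap.smul_apply,
        Module.End.one_apply, hAw]
      by_cases hcase : h = i - r - 1
      · subst hcase
        simp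
      · have hlt : h < i - (r + 1) := by omega
        have hmem : (p.θ h - p.θ (i - r - 1)) • w ∈ p.Ev h := Submodule.smul_mem _ _ hw
        rw [sub_smul] at hmem
        have hle2 : p.Ev h ≤ ⨆ h ∈ Finset.range (i - (r + 1)), p.Ev h :=
          le_iSup₂_of_le h (Finset.mem_range.mpr hlt) le_rfl
        exact hle2 hmem
    exact h2 hv2
end

section
/- Let (A, A*) be a tridiagonal pair on V with eigenspace orderings V_0, ..., V_d of A and V*_0, ..., V*_d of A*, with eigenvalues θ*_0, ..., θ*_d of A*. Fix an integer i with 1 ≤ i ≤ d, and for 0 ≤ r ≤ i−1 define W_r = (V*_0 + V*_1 + ··· + V*_r) ∩ (V_0 + V_1 + ··· + V_{i−r−1}), with the convention W_{−1} = 0. Then (A* − θ*_r I) W_r ⊆ W_{r−1} for 0 ≤ r ≤ i−1. -/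
open Polynomial

/-- Fix `1 ≤ i ≤ d` and for `0 ≤ r ≤ i - 1` define
`W_r = (V*_0 + ⋯ + V*_r) ∩ (V_0 + ⋯ + V_{i-r-1})`, with the convention
`W_{-1} = 0`.  Then `(A* - θ*_r I) W_r ⊆ W_{r-1}` for `0 ≤ r ≤ i - 1`. -/
theorem stmt4 {K V : Type*} [Field K] [AddCommGroup V] [Module K V]
    [FiniteDimensional K V] (hpos : 0 < Module.finrank K V)
    (p : TridiagonalPair K V)
    (i : ℕ) (hi1 : 1 ≤ i) (hid : i ≤ p.d)
    (W : ℕ → Submodule K V)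
    (hW : ∀ r, W r = (⨆ h ∈ Finset.range (r + 1), p.Ew h) ⊓
      (⨆ h ∈ Finset.range (i - r), p.Ev h)) :
    ∀ r ≤ i - 1, ∀ v ∈ W r,
      (p.B - p.θ' r • (1 : Module.End K V)) v ∈
        (if r = 0 then (⊥ : Submodule K V) else W (r - 1)) := by
  intro r hr v hv
  rw [hW r] at hv
  obtain ⟨hv1, hv2⟩ := hv
  set f : Module.End K V := p.B - p.θ' r • 1 with hf
  have hfapp : ∀ x : V, f x = p.B x - p.θ' r • x := fun x => by
    simp [hf, LinearMap.sub_apply, LinearMap.smul_apply]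
  have h1 : f v ∈ ⨆ h ∈ Finset.range r, p.Ew h := by
    have hmap : Submodule.map f (⨆ h ∈ Finset.range (r + 1), p.Ew h)
        ≤ ⨆ h ∈ Finset.range r, p.Ew h := by
      simp only [Submodule.map_iSup]
      apply iSup₂_le
      intro h hh
      rintro _ ⟨x, hx, rfl⟩
      have hhr : h ≤ r := by
        have := Finset.mem_range.mp hh; omega
      have hhd : h ≤ p.d := by omega
      have hB : p.B x = p.θ' h • x :=
        Module.End.mem_eigenspace_iff.mp (by rw [← p.hEw_eig h hhd]; exact hx)
      have hfx : f x = (p.θ' h - p.θ' r) • x := by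
        rw [hfapp, hB, sub_smul]
      rw [hfx]
      rcases eq_or_lt_of_le hhr with heq | hlt
      · rw [heq]; simp
      · exact Submodule.mem_iSup_of_mem h (Submodule.mem_iSup_of_mem
          (Finset.mem_range.mpr hlt) (Submodule.smul_mem _ _ hx))
    exact hmap ⟨v, hv1, rfl⟩
  have h2 : f v ∈ ⨆ h ∈ Finset.range (i - r + 1), p.Ev h := by
    have hEvle : ∀ j ≤ i - r, p.Ev j ≤ ⨆ h ∈ Finset.range (i - r + 1), p.Ev h := by
      intro j hj y hy
      exact Submodule.mem_iSup_of_mem j (Submodule.mem_iSup_of_mem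
        (Finset.mem_range.mpr (by omega)) hy)
    have hmap : Submodule.map f (⨆ h ∈ Finset.range (i - r), p.Ev h)
        ≤ ⨆ h ∈ Finset.range (i - r + 1), p.Ev h := by
      simp only [Submodule.map_iSup]
      apply iSup₂_le
      intro h hh
      rintro _ ⟨x, hx, rfl⟩
      have hhir : h < i - r := Finset.mem_range.mp hh
      have hhd : h ≤ p.d := by omega
      have hBx := p.hTriB h hhd x hx
      rw [hfapp]
      refine sub_mem ?_ (hEvle h (by omega) (Submodule.smul_mem _ _ hx))
      have hle : p.Ev (h - 1) ⊔ p.Ev h ⊔ p.Ev (h + 1)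
          ≤ ⨆ h ∈ Finset.range (i - r + 1), p.Ev h :=
        sup_le (sup_le (hEvle _ (by omega)) (hEvle _ (by omega))) (hEvle _ (by omega))
      exact hle hBx
    exact hmap ⟨v, hv2, rfl⟩
  rcases Nat.eq_zero_or_pos r with hr0 | hr0
  · subst hr0
    simp only [if_pos rfl]
    simpa using h1
  · rw [if_neg (by omega), hW (r - 1)]
    have e1 : r - 1 + 1 = r := by omega
    have e2 : i - (r - 1) = i - r + 1 := by omega
    rw [e1, e2]
    exact ⟨h1, h2⟩
end
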